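/- Let R be a (possibly non-unital) associative ring graded by paths, defined as follows: fix a finite set A ⊂ ℝ² with no three points collinear and a generic unit vector ζ; basis elements are ζ-convex polygonal paths in A; the product of paths γ (from i to j) and γ' (from j to k) is γ' ∘ γ if the concatenation is ζ-convex and 0 otherwise. Then this product is associative. -/

import Mathlib

open scoped Classical

/-- The union of the rays `w + ℝ₊·ζ` over `w ∈ s`. -/
def rayUnion (ζ : ℂ) (s : Set ℂ) : Set ℂ :=
  ⋃ w ∈ s, {z : ℂ | ∃ t : ℝ, 0 ≤ t ∧ z = w + (t : ℂ) * ζ}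

/-- The coordinate in the direction orthogonal to `ζ`. -/
noncomputable def hcoord (ζ z : ℂ) : ℝ := (z / (Complex.I * ζ)).re

/-- A `ζ`-convex polygonal path, as a nonempty list of points ordered by the
coordinate orthogonal to `ζ`, each point being a vertex (extreme point) of the convex
hull of the union of the rays out of the points of the list in direction `ζ`. -/
def IsZetaConvexList (ζ : ℂ) (l : List ℂ) : Prop :=
  l ≠ [] ∧ l.Pairwise (fun x y => hcoord ζ x < hcoord ζ y) ∧
  ∀ w ∈ l, w ∈ Set.extremePoints ℝ (convexHull ℝ (rayUnion ζ {x | x ∈ l}))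

/-- Product of two basis paths: the concatenation if the endpoints match and the
concatenation is again `ζ`-convex, and `0` (i.e. `none`) otherwise. -/
noncomputable def pathMul (ζ : ℂ) (γ γ' : List ℂ) : Option (List ℂ) :=
  if γ.getLast? = γ'.head? ∧ IsZetaConvexList ζ (γ ++ γ'.tail) then some (γ ++ γ'.tail)
  else none

/-- The product extended to `0` (`none`): the structure map of the path ring `R`. -/
noncomputable def optMul (ζ : ℂ) (a b : Option (List ℂ)) : Option (List ℂ) :=
  a.bind fun γ => b.bind fun γ' => pathMul ζ γ γ'

/-!
Both bracketings of `γ₁ γ₂ γ₃` equal the triple concatenation when the endpoints match and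
the concatenation is `ζ`-convex, and `0` otherwise. The point is that `ζ`-convexity passes to
nonempty sublists: fewer rays span a smaller convex hull, and a point of that smaller hull
which is extreme in the larger one stays extreme. Both partial concatenations are sublists
of the total one, the right one because `γ₁ ++ γ₂.tail = γ₁.dropLast ++ γ₂`.
-/

namespace List

variable {α : Type*}

theorem getLast?_append_tail_of_getLast?_eq_head? {l l' : List α}
    (h : l.getLast? = l'.head?) : (l ++ l'.tail).getLast? = l'.getLast? := by
  cases l' with
  | nil => simpa using h
  | cons b t =>
    cases t with
    | nil => simpa using h
    | cons c s => simp [getLast?_append, getLast?_cons]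

theorem append_tail_eq_dropLast_append_of_getLast?_eq_head? {l l' : List α}
    (h : l.getLast? = l'.head?) : l ++ l'.tail = l.dropLast ++ l' := by
  cases l' with
  | nil => simp_all
  | cons b t =>
    conv_lhs => rw [← dropLast_append_getLast? (l := l) b (by simpa using h)]
    simp

end List

theorem rayUnion_mono (ζ : ℂ) {s t : Set ℂ} (hst : s ⊆ t) : rayUnion ζ s ⊆ rayUnion ζ t :=
  Set.biUnion_subset_biUnion_left hst

theorem subset_rayUnion (ζ : ℂ) (s : Set ℂ) : s ⊆ rayUnion ζ s :=
  fun w hw => Set.mem_biUnion hw ⟨0, le_rfl, by simp⟩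

theorem IsZetaConvexList.sublist {ζ : ℂ} {l L : List ℂ} (hL : IsZetaConvexList ζ L)
    (hlL : l.Sublist L) (hl : l ≠ []) : IsZetaConvexList ζ l := by
  refine ⟨hl, hL.2.1.sublist hlL, fun w hw => ?_⟩
  have hrays : rayUnion ζ {x | x ∈ l} ⊆ rayUnion ζ {x | x ∈ L} :=
    rayUnion_mono ζ fun x hx => hlL.subset hx
  exact inter_extremePoints_subset_extremePoints_of_subset (convexHull_mono hrays)
    ⟨subset_convexHull ℝ _ (subset_rayUnion ζ _ hw), hL.2.2 w (hlL.subset hw)⟩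

theorem IsZetaConvexList.of_append_tail_left {ζ : ℂ} {γ₁ γ₂ γ₃ : List ℂ}
    (h : IsZetaConvexList ζ (γ₁ ++ γ₂.tail ++ γ₃.tail)) (h₁ : γ₁ ≠ []) :
    IsZetaConvexList ζ (γ₁ ++ γ₂.tail) :=
  h.sublist (List.sublist_append_left _ _) (by simp [h₁])

theorem IsZetaConvexList.of_append_tail_right {ζ : ℂ} {γ₁ γ₂ γ₃ : List ℂ}
    (h : IsZetaConvexList ζ (γ₁ ++ γ₂.tail ++ γ₃.tail)) (h12 : γ₁.getLast? = γ₂.head?)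
    (h₂ : γ₂ ≠ []) : IsZetaConvexList ζ (γ₂ ++ γ₃.tail) := by
  refine h.sublist ?_ (by simp [h₂])
  rw [List.append_assoc, ← List.tail_append_of_ne_nil h₂,
    List.append_tail_eq_dropLast_append_of_getLast?_eq_head? (l' := γ₂ ++ γ₃.tail)
      (by rwa [List.head?_append_of_ne_nil _ h₂])]
  exact List.sublist_append_right _ _

noncomputable def pathMul₃ (ζ : ℂ) (γ₁ γ₂ γ₃ : List ℂ) : Option (List ℂ) :=
  if γ₁.getLast? = γ₂.head? ∧ γ₂.getLast? = γ₃.head? ∧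
      IsZetaConvexList ζ (γ₁ ++ γ₂.tail ++ γ₃.tail) then
    some (γ₁ ++ γ₂.tail ++ γ₃.tail)
  else none

theorem optMul_pathMul_left {ζ : ℂ} {γ₁ : List ℂ} (γ₂ γ₃ : List ℂ) (h₁ : γ₁ ≠ []) :
    optMul ζ (pathMul ζ γ₁ γ₂) (some γ₃) = pathMul₃ ζ γ₁ γ₂ γ₃ := by
  by_cases h12 : γ₁.getLast? = γ₂.head?
  swap
  · simp [optMul, pathMul, pathMul₃, h12]
  by_cases htot : IsZetaConvexList ζ (γ₁ ++ γ₂.tail ++ γ₃.tail)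
  swap
  · unfold optMul pathMul pathMul₃
    split_ifs <;> simp_all
  rw [optMul, pathMul, if_pos ⟨h12, htot.of_append_tail_left h₁⟩]
  simp only [Option.bind_some, pathMul, pathMul₃, h12, htot, true_and, and_true,
    List.getLast?_append_tail_of_getLast?_eq_head? h12]

theorem optMul_pathMul_right {ζ : ℂ} {γ₁ γ₂ : List ℂ} (γ₃ : List ℂ) (h₂ : γ₂ ≠ []) :
    optMul ζ (some γ₁) (pathMul ζ γ₂ γ₃) = pathMul₃ ζ γ₁ γ₂ γ₃ := by
  by_cases h12 : γ₁.getLast? = γ₂.head?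
  swap
  · unfold optMul pathMul pathMul₃
    split_ifs <;> simp_all [List.head?_append_of_ne_nil _ h₂, List.tail_append_of_ne_nil h₂]
  by_cases htot : IsZetaConvexList ζ (γ₁ ++ γ₂.tail ++ γ₃.tail)
  swap
  · unfold optMul pathMul pathMul₃
    split_ifs <;> simp_all [List.tail_append_of_ne_nil]
  by_cases h23 : γ₂.getLast? = γ₃.head?
  swap
  · simp [optMul, pathMul, pathMul₃, h23]
  rw [pathMul, if_pos ⟨h23, htot.of_append_tail_right h12 h₂⟩]
  simp only [optMul, Option.bind_some, pathMul, pathMul₃, List.head?_append_of_ne_nil _ h₂,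
    List.tail_append_of_ne_nil h₂, ← List.append_assoc, h12, h23, htot, and_self]

theorem path_algebra_assoc_general (A : Finset ℂ) (ζ : ℂ) :
    ∀ γ₁ γ₂ γ₃ : List ℂ,
      (∀ x ∈ γ₁, x ∈ A) → (∀ x ∈ γ₂, x ∈ A) → (∀ x ∈ γ₃, x ∈ A) →
      IsZetaConvexList ζ γ₁ → IsZetaConvexList ζ γ₂ → IsZetaConvexList ζ γ₃ →
      optMul ζ (optMul ζ (some γ₁) (some γ₂)) (some γ₃) =
        optMul ζ (some γ₁) (optMul ζ (some γ₂) (some γ₃)) := by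
  intro γ₁ γ₂ γ₃ _ _ _ h₁ h₂ _
  exact (optMul_pathMul_left γ₂ γ₃ h₁.1).trans (optMul_pathMul_right γ₃ h₂.1).symm

/-- Associativity of the path algebra of `ζ`-convex polygonal paths in a finite set
`A ⊂ ℝ² = ℂ` with no three points collinear and generic unit `ζ`: the product
(concatenation if `ζ`-convex, zero otherwise) is associative on basis elements. -/
theorem path_algebra_assoc (A : Finset ℂ)
    (hcol : ∀ a ∈ A, ∀ b ∈ A, ∀ c ∈ A, a ≠ b → a ≠ c → b ≠ c →
      ¬ Collinear ℝ ({a, b, c} : Set ℂ))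
    (ζ : ℂ) (hζ : ‖ζ‖ = 1) (hgen : Set.InjOn (hcoord ζ) (A : Set ℂ)) :
    ∀ γ₁ γ₂ γ₃ : List ℂ,
      (∀ x ∈ γ₁, x ∈ A) → (∀ x ∈ γ₂, x ∈ A) → (∀ x ∈ γ₃, x ∈ A) →
      IsZetaConvexList ζ γ₁ → IsZetaConvexList ζ γ₂ → IsZetaConvexList ζ γ₃ →
      optMul ζ (optMul ζ (some γ₁) (some γ₂)) (some γ₃) =
        optMul ζ (some γ₁) (optMul ζ (some γ₂) (some γ₃)) :=
  path_algebra_assoc_general A ζ
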